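/- Let s and b be independent nonnegative integrable real-valued random variables, and suppose the seller's distribution admits a quantile function q : [1/e, 1] → ℝ with P(s ≤ q(x)) = x and P(s < q(x)) = x for every x ∈ [1/e, 1]. Then there exists a deterministic price p ∈ ℝ such that E[s + (b − s)·𝟙{s ≤ p ∧ p ≤ b}] ≥ (1 − 1/e)·E[max(s, b)]. -/

import Mathlib

open MeasureTheory ProbabilityTheory Set Real
open scoped ENNReal

/-!
Draw a quantile `x` from the density `1/x` on `[1/e, 1]` and post the price `q x`. Fix the
buyer's value `c` and let `v = P(s < c)`. Every `x < v` gives a price below `c`, at which an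
efficient trade is missed only when `s > q x`, an event of probability `v - x`. Averaging against
the density `1/x`, an efficient trade is missed with probability at most `v - (v - 1/e)⁺ ≤ 1/e`,
and a missed trade loses at most `c`. So the expected loss is at most `E[b]/e ≤ E[max(s, b)]/e`,
and some deterministic `x` loses no more than the average.
-/

/-- The law of `exp (-U)` for `U` uniform on `[0, 1]`. -/
noncomputable def logUniform : Measure ℝ :=
  (volume.restrict (Ioo (exp 1)⁻¹ 1)).withDensity fun x => ENNReal.ofReal x⁻¹

lemma inv_exp_one_pos : 0 < (exp 1)⁻¹ := inv_pos.2 (exp_pos 1)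

lemma inv_exp_one_lt_one : (exp 1)⁻¹ < 1 := inv_lt_one_of_one_lt₀ (one_lt_exp_iff.2 one_pos)

instance isProbabilityMeasure_logUniform : IsProbabilityMeasure logUniform := by
  constructor
  have hint : IntegrableOn (fun x : ℝ => x⁻¹) (Ioo (exp 1)⁻¹ 1) := by
    refine (intervalIntegrable_iff_integrableOn_Ioo_of_le inv_exp_one_lt_one.le).1 ?_
    refine intervalIntegral.intervalIntegrable_inv (fun x hx => ?_) continuousOn_id
    rw [uIcc_of_le inv_exp_one_lt_one.le] at hx
    exact (inv_exp_one_pos.trans_le hx.1).ne'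
  rw [logUniform, withDensity_apply _ MeasurableSet.univ, Measure.restrict_univ,
    ← ofReal_integral_eq_lintegral_ofReal hint
      (ae_restrict_of_forall_mem measurableSet_Ioo fun x hx =>
        inv_nonneg.2 (inv_exp_one_pos.trans hx.1).le),
    ← integral_Ioc_eq_integral_Ioo, ← intervalIntegral.integral_of_le inv_exp_one_lt_one.le,
    integral_inv_of_pos inv_exp_one_pos one_pos]
  simp

lemma ae_logUniform_mem_Ioo : ∀ᵐ x ∂logUniform, x ∈ Ioo (exp 1)⁻¹ 1 :=
  (withDensity_absolutelyContinuous _ _).ae_le (ae_restrict_mem measurableSet_Ioo)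

lemma withDensity_ofReal_logUniform :
    logUniform.withDensity ENNReal.ofReal = volume.restrict (Ioo (exp 1)⁻¹ 1) := by
  rw [logUniform, ← withDensity_mul _ (by fun_prop) (by fun_prop)]
  conv_rhs => rw [← withDensity_one (μ := volume.restrict (Ioo (exp 1)⁻¹ 1))]
  refine withDensity_congr_ae (ae_restrict_of_forall_mem measurableSet_Ioo fun x hx => ?_)
  have hx0 : 0 < x := inv_exp_one_pos.trans hx.1
  simp [← ENNReal.ofReal_mul (inv_nonneg.2 hx0.le), inv_mul_cancel₀ hx0.ne']

def missedTradePrices (a c : ℝ) : Set ℝ := {p | a < c ∧ ¬(a ≤ p ∧ p ≤ c)}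

lemma measurableSet_missedTradePrices {α : Type*} [MeasurableSpace α] {a c p : α → ℝ}
    (ha : Measurable a) (hc : Measurable c) (hp : Measurable p) :
    MeasurableSet {w | p w ∈ missedTradePrices (a w) (c w)} :=
  (measurableSet_lt ha hc).inter
    ((measurableSet_le ha hp).inter (measurableSet_le hp hc)).compl

section Quantile

variable {ν : Measure ℝ} [IsProbabilityMeasure ν] {q : ℝ → ℝ}
  (hq_le : ∀ x ∈ Icc (exp 1)⁻¹ 1, ν (Iic (q x)) = ENNReal.ofReal x)
  (hq_lt : ∀ x ∈ Icc (exp 1)⁻¹ 1, ν (Iio (q x)) = ENNReal.ofReal x)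
include hq_le hq_lt

lemma measure_missedTradePrices_add_le (c : ℝ) {x : ℝ} (hx : x ∈ Icc (exp 1)⁻¹ 1) :
    ν {a | q x ∈ missedTradePrices a c} + (Iio (ν.real (Iio c))).indicator ENNReal.ofReal x
      ≤ ν (Iio c) := by
  by_cases hxv : x < ν.real (Iio c)
  · have hx_lt : ENNReal.ofReal x < ν (Iio c) :=
      (ENNReal.ofReal_lt_iff_lt_toReal (inv_exp_one_pos.le.trans hx.1) (measure_ne_top _ _)).2 hxv
    have hqc : q x < c := by
      by_contra! hcq
      exact (measure_mono (Iio_subset_Iio hcq)).trans_eq (hq_lt x hx) |>.not_gt hx_lt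
    have hsub : {a | q x ∈ missedTradePrices a c} ⊆ Iio c \ Iic (q x) :=
      fun a ha => ⟨ha.1, fun haq => ha.2 ⟨haq, hqc.le⟩⟩
    rw [indicator_of_mem (mem_Iio.2 hxv)]
    calc _ ≤ ν (Iio c \ Iic (q x)) + ENNReal.ofReal x := by gcongr
      _ = ν (Iio c) := by
        rw [measure_sdiff (Iic_subset_Iio.2 hqc) measurableSet_Iic.nullMeasurableSet
          (measure_ne_top _ _), hq_le x hx, tsub_add_cancel_of_le hx_lt.le]
  · rw [indicator_of_notMem (notMem_Iio.2 (not_lt.1 hxv)), add_zero]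
    exact measure_mono fun a ha => ha.1

lemma lintegral_logUniform_measure_missedTradePrices_le (c : ℝ) :
    ∫⁻ x, ν {a | q x ∈ missedTradePrices a c} ∂logUniform ≤ ENNReal.ofReal (exp 1)⁻¹ := by
  set v := ν.real (Iio c)
  have hv : ENNReal.ofReal v = ν (Iio c) := ENNReal.ofReal_toReal (measure_ne_top _ _)
  have hgain : ENNReal.ofReal (v - (exp 1)⁻¹)
      ≤ ∫⁻ x, (Iio v).indicator ENNReal.ofReal x ∂logUniform := by
    rw [lintegral_indicator measurableSet_Iio, ← withDensity_apply _ measurableSet_Iio,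
      withDensity_ofReal_logUniform, Measure.restrict_apply measurableSet_Iio, ← Real.volume_Ioo]
    exact measure_mono fun x hx => ⟨hx.2, hx.1, hx.2.trans_le measureReal_le_one⟩
  have htotal : ∫⁻ x, ν {a | q x ∈ missedTradePrices a c} ∂logUniform
      + ∫⁻ x, (Iio v).indicator ENNReal.ofReal x ∂logUniform ≤ ν (Iio c) := by
    refine (le_lintegral_add _ _).trans ((lintegral_mono_ae (g := fun _ => ν (Iio c)) ?_).trans
      (by rw [lintegral_const, measure_univ, mul_one]))
    filter_upwards [ae_logUniform_mem_Ioo] with x hx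
    exact measure_missedTradePrices_add_le hq_le hq_lt c (Ioo_subset_Icc_self hx)
  refine ENNReal.le_of_add_le_add_right (a := ENNReal.ofReal (v - (exp 1)⁻¹))
    ENNReal.ofReal_ne_top ?_
  calc _ ≤ _ := add_le_add_right hgain _
    _ ≤ ENNReal.ofReal v := hv ▸ htotal
    _ ≤ _ := by simpa using ENNReal.ofReal_add_le (p := (exp 1)⁻¹) (q := v - (exp 1)⁻¹)

lemma lintegral_measure_preimage_missedTradePrices_le (hq : Measurable q) (c : ℝ) :
    ∫⁻ a, logUniform (q ⁻¹' missedTradePrices a c) ∂ν ≤ ENNReal.ofReal (exp 1)⁻¹ := by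
  have hS : MeasurableSet {y : ℝ × ℝ | q y.2 ∈ missedTradePrices y.1 c} :=
    measurableSet_missedTradePrices measurable_fst measurable_const (hq.comp measurable_snd)
  calc _ = ν.prod logUniform {y | q y.2 ∈ missedTradePrices y.1 c} :=
        (Measure.prod_apply hS).symm
    _ = _ := Measure.prod_apply_symm hS
    _ ≤ _ := lintegral_logUniform_measure_missedTradePrices_le hq_le hq_lt c

end Quantile

noncomputable def fixedPriceWelfare (a c p : ℝ) : ℝ :=
  a + (c - a) * if a ≤ p ∧ p ≤ c then 1 else 0

noncomputable def welfareLoss (a c p : ℝ) : ℝ := max a c - fixedPriceWelfare a c p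

section Measurability

variable {α : Type*} [MeasurableSpace α] {a c p : α → ℝ}
  (ha : Measurable a) (hc : Measurable c) (hp : Measurable p)
include ha hc hp

lemma measurable_fixedPriceWelfare : Measurable fun w => fixedPriceWelfare (a w) (c w) (p w) :=
  ha.add ((hc.sub ha).mul (Measurable.ite
    ((measurableSet_le ha hp).inter (measurableSet_le hp hc)) measurable_const measurable_const))

lemma measurable_ofReal_welfareLoss :
    Measurable fun w => ENNReal.ofReal (welfareLoss (a w) (c w) (p w)) :=
  ENNReal.measurable_ofReal.comp ((ha.max hc).sub (measurable_fixedPriceWelfare ha hc hp))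

end Measurability

lemma welfareLoss_nonneg (a c p : ℝ) : 0 ≤ welfareLoss a c p := by
  rw [welfareLoss, fixedPriceWelfare, sub_nonneg]
  split_ifs <;> simp

lemma abs_fixedPriceWelfare_le (a c p : ℝ) : |fixedPriceWelfare a c p| ≤ |a| + |c| := by
  rw [fixedPriceWelfare]
  split_ifs <;> simp

lemma ofReal_welfareLoss_le_indicator {a : ℝ} (ha : 0 ≤ a) (c p : ℝ) :
    ENNReal.ofReal (welfareLoss a c p)
      ≤ (missedTradePrices a c).indicator (fun _ => ENNReal.ofReal c) p := by
  by_cases htrade : a ≤ p ∧ p ≤ c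
  · have hac : a ≤ c := htrade.1.trans htrade.2
    simp [welfareLoss, fixedPriceWelfare, htrade, hac]
  rcases lt_or_ge a c with hac | hca
  · rw [indicator_of_mem (show p ∈ missedTradePrices a c from ⟨hac, htrade⟩)]
    simp only [welfareLoss, fixedPriceWelfare, htrade, if_false, mul_zero, add_zero,
      max_eq_right hac.le]
    exact ENNReal.ofReal_le_ofReal (by linarith)
  · simp [welfareLoss, fixedPriceWelfare, htrade, hca]

lemma lintegral_logUniform_lintegral_welfareLoss_le {Ω : Type*} [MeasurableSpace Ω] {P : Measure Ω}
    [IsProbabilityMeasure P] {s b : Ω → ℝ} (hs : Measurable s) (hb : Measurable b)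
    (hindep : IndepFun s b P) (hs0 : ∀ ω, 0 ≤ s ω) {q : ℝ → ℝ} (hq : Measurable q)
    (hq_le : ∀ x ∈ Icc (exp 1)⁻¹ 1, P.map s (Iic (q x)) = ENNReal.ofReal x)
    (hq_lt : ∀ x ∈ Icc (exp 1)⁻¹ 1, P.map s (Iio (q x)) = ENNReal.ofReal x) :
    ∫⁻ x, ∫⁻ ω, ENNReal.ofReal (welfareLoss (s ω) (b ω) (q x)) ∂P
        ∂logUniform ≤ ENNReal.ofReal (exp 1)⁻¹ * ∫⁻ ω, ENNReal.ofReal (b ω) ∂P := by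
  have : IsProbabilityMeasure (P.map s) := Measure.isProbabilityMeasure_map hs.aemeasurable
  have hH : Measurable fun z : ℝ × ℝ =>
      ENNReal.ofReal z.2 * logUniform (q ⁻¹' missedTradePrices z.1 z.2) :=
    (ENNReal.measurable_ofReal.comp measurable_snd).mul (measurable_measure_prodMk_left
      (measurableSet_missedTradePrices (measurable_fst.comp measurable_fst)
        (measurable_snd.comp measurable_fst) (hq.comp measurable_snd)))
  calc _ = ∫⁻ ω, ∫⁻ x, ENNReal.ofReal (welfareLoss (s ω) (b ω) (q x))
        ∂logUniform ∂P := lintegral_lintegral_swap (measurable_ofReal_welfareLoss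
          (hs.comp measurable_snd) (hb.comp measurable_snd) (hq.comp measurable_fst)).aemeasurable
    _ ≤ ∫⁻ ω, ENNReal.ofReal (b ω) * logUniform (q ⁻¹' missedTradePrices (s ω) (b ω)) ∂P :=
      lintegral_mono fun ω => (lintegral_mono fun x => ofReal_welfareLoss_le_indicator
        (hs0 ω) _ _).trans (lintegral_indicator_const_le _ _)
    _ = ∫⁻ z, ENNReal.ofReal z.2 * logUniform (q ⁻¹' missedTradePrices z.1 z.2)
        ∂(P.map s).prod (P.map b) := by
      rw [← hindep.map_prod_eq_prod_map_map hs.aemeasurable hb.aemeasurable,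
        lintegral_map hH (hs.prodMk hb)]
    _ = ∫⁻ c, ENNReal.ofReal c * ∫⁻ a, logUniform (q ⁻¹' missedTradePrices a c) ∂P.map s
        ∂P.map b := by
      rw [lintegral_prod_symm _ hH.aemeasurable]
      simp_rw [lintegral_const_mul' _ _ ENNReal.ofReal_ne_top]
    _ ≤ ∫⁻ c, ENNReal.ofReal c * ENNReal.ofReal (exp 1)⁻¹ ∂P.map b := by
      gcongr with c
      exact lintegral_measure_preimage_missedTradePrices_le hq_le hq_lt hq c
    _ = _ := by
      rw [lintegral_mul_const _ ENNReal.measurable_ofReal,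
        lintegral_map ENNReal.measurable_ofReal hb, mul_comm]

lemma one_sub_mul_integral_max_le_integral_fixedPriceWelfare {Ω : Type*} [MeasurableSpace Ω]
    {P : Measure Ω} {s b : Ω → ℝ} (hs : Measurable s) (hb : Measurable b)
    (hs0 : ∀ ω, 0 ≤ s ω) (hsi : Integrable s P) (hbi : Integrable b P) {ε p : ℝ} (hε : 0 ≤ ε)
    (hloss : ∫⁻ ω, ENNReal.ofReal (welfareLoss (s ω) (b ω) p) ∂P
      ≤ ENNReal.ofReal ε * ∫⁻ ω, ENNReal.ofReal (b ω) ∂P) :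
    (1 - ε) * ∫ ω, max (s ω) (b ω) ∂P ≤ ∫ ω, fixedPriceWelfare (s ω) (b ω) p ∂P := by
  have hmax : Integrable (fun ω => max (s ω) (b ω)) P := hsi.sup hbi
  have hW : Integrable (fun ω => fixedPriceWelfare (s ω) (b ω) p) P :=
    (hsi.abs.add hbi.abs).mono'
      (measurable_fixedPriceWelfare hs hb measurable_const).aestronglyMeasurable
      (ae_of_all _ fun ω => abs_fixedPriceWelfare_le _ _ _)
  have hmax0 : 0 ≤ᵐ[P] fun ω => max (s ω) (b ω) := ae_of_all _ fun ω => le_max_of_le_left (hs0 ω)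
  have hloss_real : ∫ ω, welfareLoss (s ω) (b ω) p ∂P ≤ ε * ∫ ω, max (s ω) (b ω) ∂P := by
    rw [integral_eq_lintegral_of_nonneg_ae (ae_of_all _ fun ω => welfareLoss_nonneg _ _ _)
      (hmax.sub hW).aestronglyMeasurable]
    refine ENNReal.toReal_le_of_le_ofReal (mul_nonneg hε (integral_nonneg_of_ae hmax0)) ?_
    calc _ ≤ ENNReal.ofReal ε * ∫⁻ ω, ENNReal.ofReal (b ω) ∂P := hloss
      _ ≤ ENNReal.ofReal ε * ∫⁻ ω, ENNReal.ofReal (max (s ω) (b ω)) ∂P := by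
        gcongr with ω
        exact le_max_right _ _
      _ = _ := by rw [← ofReal_integral_eq_lintegral_ofReal hmax hmax0, ← ENNReal.ofReal_mul hε]
  simp only [welfareLoss] at hloss_real
  rw [integral_sub hmax hW] at hloss_real
  linarith

theorem exists_deterministic_price_one_sub_inv_e_general
    {Ω : Type*} [MeasurableSpace Ω] {P : Measure Ω} [IsProbabilityMeasure P]
    (s b : Ω → ℝ)
    (hsm : Measurable s) (hbm : Measurable b)
    (hindep : IndepFun s b P)
    (hs0 : ∀ ω, 0 ≤ s ω)
    (hsi : Integrable s P) (hbi : Integrable b P)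
    (q : ℝ → ℝ) (hqm : Measurable q)
    (hq1 : ∀ x ∈ Set.Icc (Real.exp 1)⁻¹ 1, P {ω | s ω ≤ q x} = ENNReal.ofReal x)
    (hq2 : ∀ x ∈ Set.Icc (Real.exp 1)⁻¹ 1, P {ω | s ω < q x} = ENNReal.ofReal x) :
    ∃ p : ℝ,
      ∫ ω, (s ω + (b ω - s ω) * (if s ω ≤ p ∧ p ≤ b ω then (1:ℝ) else 0)) ∂P
        ≥ (1 - (Real.exp 1)⁻¹) * ∫ ω, max (s ω) (b ω) ∂P := by
  have hloss := lintegral_logUniform_lintegral_welfareLoss_le hsm hbm hindep hs0 hqm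
    (fun x hx => (Measure.map_apply hsm measurableSet_Iic).trans (hq1 x hx))
    (fun x hx => (Measure.map_apply hsm measurableSet_Iio).trans (hq2 x hx))
  obtain ⟨x, hx⟩ := exists_le_lintegral (μ := logUniform)
    (Measurable.lintegral_prod_right' (ν := P) (measurable_ofReal_welfareLoss
      (hsm.comp measurable_snd) (hbm.comp measurable_snd) (hqm.comp measurable_fst))).aemeasurable
  exact ⟨q x, one_sub_mul_integral_max_le_integral_fixedPriceWelfare hsm hbm hs0 hsi hbi
    inv_exp_one_pos.le (hx.trans hloss)⟩

/-- **A deterministic (1 - 1/e)-approximation price always exists.**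
Let `s, b` be independent nonnegative integrable random variables and let `q`
be a quantile function of the seller's distribution on `[1/e, 1]` (so
`P(s ≤ q x) = P(s < q x) = x` there). Then some deterministic posted price `p`
achieves expected welfare at least `(1 - 1/e)·E[max(s,b)]`. -/
theorem exists_deterministic_price_one_sub_inv_e
    {Ω : Type*} [MeasurableSpace Ω] {P : Measure Ω} [IsProbabilityMeasure P]
    (s b : Ω → ℝ)
    (hsm : Measurable s) (hbm : Measurable b)
    (hindep : IndepFun s b P)
    (hs0 : ∀ ω, 0 ≤ s ω) (hb0 : ∀ ω, 0 ≤ b ω)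
    (hsi : Integrable s P) (hbi : Integrable b P)
    (q : ℝ → ℝ) (hqm : Measurable q)
    (hq1 : ∀ x ∈ Set.Icc (Real.exp 1)⁻¹ 1, P {ω | s ω ≤ q x} = ENNReal.ofReal x)
    (hq2 : ∀ x ∈ Set.Icc (Real.exp 1)⁻¹ 1, P {ω | s ω < q x} = ENNReal.ofReal x) :
    ∃ p : ℝ,
      ∫ ω, (s ω + (b ω - s ω) * (if s ω ≤ p ∧ p ≤ b ω then (1:ℝ) else 0)) ∂P
        ≥ (1 - (Real.exp 1)⁻¹) * ∫ ω, max (s ω) (b ω) ∂P :=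
  exists_deterministic_price_one_sub_inv_e_general s b hsm hbm hindep hs0 hsi hbi q hqm hq1 hq2
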